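/- Define n_0 = e·v_p(a_1) if i_0 = 1, and n_0 = max{n ∈ Z : i_0^n ≤ e(i_0 - 1)v_p(a_{i_0}) + 1} if i_0 ≠ 1, where i_0 is the least index with a_{i_0} ≠ 0. Then: f^{(n)}(π) ≠ 0 for all n ≥ 1 if and only if f^{(n)}(π) ≠ 0 for all 1 ≤ n ≤ n_0. -/

import Mathlib

/-! Since `f ≡ u ^ p mod p` and `f` has no terms below `u ^ i₀`, each term of `f(x)` has
valuation at least `i₀ v(x) + 1/e` once `v(x) ≥ 1/e`; along the orbit of `π` the valuations
therefore grow at least like `(1 + i₀ + ⋯ + i₀ ^ k) / e`. At a nonzero root `x` of `f` with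
`v(x) ≥ 0`, the term `a_{i₀} x ^ i₀` must cancel the others, which have valuation at least
`(i₀ + 1) v(x)`, so `v(x) ≤ v(a_{i₀})`. Applied to the last nonzero point `f^[k] π` of an orbit
that reaches `0`, this gives `1 + i₀ + ⋯ + i₀ ^ k ≤ e v(a_{i₀})`, i.e. `k + 1 ≤ n₀`. -/

section

variable {K : Type*} [Field K] {v : K → ℝ}

lemma val_one (hmul : ∀ x y : K, x ≠ 0 → y ≠ 0 → v (x * y) = v x + v y) : v 1 = 0 := by
  have h := hmul 1 1 one_ne_zero one_ne_zero
  rw [mul_one] at h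
  linarith

lemma val_neg (hmul : ∀ x y : K, x ≠ 0 → y ≠ 0 → v (x * y) = v x + v y)
    {x : K} (hx : x ≠ 0) : v (-x) = v x := by
  have hsq := hmul (-1) (-1) (neg_ne_zero.2 one_ne_zero) (neg_ne_zero.2 one_ne_zero)
  rw [neg_one_mul, neg_neg, val_one hmul] at hsq
  rw [← neg_one_mul, hmul _ _ (neg_ne_zero.2 one_ne_zero) hx]
  linarith

lemma val_pow (hmul : ∀ x y : K, x ≠ 0 → y ≠ 0 → v (x * y) = v x + v y)
    {x : K} (hx : x ≠ 0) (n : ℕ) : v (x ^ n) = n * v x := by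
  induction n with
  | zero => simp [val_one hmul]
  | succ n ih =>
    rw [pow_succ, hmul _ _ (pow_ne_zero n hx) hx, ih]
    push_cast
    ring

lemma le_val_sum (hadd : ∀ x y : K, x ≠ 0 → y ≠ 0 → x + y ≠ 0 → min (v x) (v y) ≤ v (x + y))
    {ι : Type*} (s : Finset ι) (g : ι → K) {c : ℝ}
    (hg : ∀ j ∈ s, g j = 0 ∨ c ≤ v (g j)) (hsum : ∑ j ∈ s, g j ≠ 0) :
    c ≤ v (∑ j ∈ s, g j) := by
  classical
  induction s using Finset.induction_on with
  | empty => simp at hsum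
  | @insert i s his ih =>
    have hs : ∀ j ∈ s, g j = 0 ∨ c ≤ v (g j) := fun j hj => hg j (Finset.mem_insert_of_mem hj)
    rw [Finset.sum_insert his] at hsum ⊢
    by_cases hgi0 : g i = 0
    · rw [hgi0, zero_add] at hsum ⊢
      exact ih hs hsum
    have hgi : c ≤ v (g i) := (hg i (Finset.mem_insert_self i s)).resolve_left hgi0
    by_cases hrest : ∑ j ∈ s, g j = 0
    · rwa [hrest, add_zero]
    exact (le_min hgi (ih hs hrest)).trans (hadd _ _ hgi0 hrest hsum)

end

lemma Function.exists_not_iterate_and_iterate_succ {α : Type*} (f : α → α) {P : α → Prop}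
    {x : α} (hx : ¬ P x) {n : ℕ} (hn : P (f^[n] x)) :
    ∃ k, ¬ P (f^[k] x) ∧ P (f^[k + 1] x) := by
  induction n with
  | zero => exact absurd hn hx
  | succ n ih =>
    by_cases h : P (f^[n] x)
    exacts [ih h, ⟨n, h, hn⟩]

section

variable {K : Type*} [Field K] {v : K → ℝ} {a : ℕ → K} {p i₀ : ℕ}

def polyEval (a : ℕ → K) (p : ℕ) (x : K) : K :=
  ∑ j ∈ Finset.range (p + 1), a j * x ^ j

lemma polyEval_zero (ha₀ : a 0 = 0) : polyEval a p 0 = 0 := by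
  refine Finset.sum_eq_zero fun j _ => ?_
  rcases j with _ | j
  · rw [ha₀, zero_mul]
  · rw [zero_pow j.succ_ne_zero, mul_zero]

lemma coeff_mul_pow_eq_zero_or_le (hmul : ∀ x y : K, x ≠ 0 → y ≠ 0 → v (x * y) = v x + v y)
    (hap : a p = 1) (haint : ∀ i, i < p → a i = 0 ∨ 1 ≤ v (a i))
    {x : K} (hx : x ≠ 0) {j : ℕ} (hj : j ≤ p) :
    a j * x ^ j = 0 ∨ min (1 + j * v x) (p * v x) ≤ v (a j * x ^ j) := by
  rcases hj.lt_or_eq with hj | rfl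
  · by_cases haj0 : a j = 0
    · simp [haj0]
    have haj : 1 ≤ v (a j) := (haint j hj).resolve_left haj0
    right
    rw [hmul _ _ haj0 (pow_ne_zero j hx), val_pow hmul hx]
    exact (min_le_left _ _).trans (by linarith)
  · right
    rw [hap, one_mul, val_pow hmul hx]
    exact min_le_right _ _

lemma le_val_polyEval (hmul : ∀ x y : K, x ≠ 0 → y ≠ 0 → v (x * y) = v x + v y)
    (hadd : ∀ x y : K, x ≠ 0 → y ≠ 0 → x + y ≠ 0 → min (v x) (v y) ≤ v (x + y))
    (hap : a p = 1) (haint : ∀ i, i < p → a i = 0 ∨ 1 ≤ v (a i))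
    (hi₀p : i₀ < p) (hlow : ∀ i, i < i₀ → a i = 0)
    {x : K} (hx : x ≠ 0) {c s : ℝ} (hc₀ : 0 ≤ c) (hc₁ : c ≤ 1) (hcs : c ≤ s) (hs : s ≤ v x)
    (hfx : polyEval a p x ≠ 0) :
    i₀ * s + c ≤ v (polyEval a p x) := by
  have hs₀ : 0 ≤ s := hc₀.trans hcs
  refine le_val_sum hadd _ _ (fun j hj => ?_) hfx
  rcases lt_or_ge j i₀ with hji | hji
  · exact .inl (by rw [hlow j hji, zero_mul])
  have hjp : j ≤ p := Nat.lt_succ_iff.1 (Finset.mem_range.1 hj)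
  refine (coeff_mul_pow_eq_zero_or_le hmul hap haint hx hjp).imp_right (le_trans (le_min ?_ ?_))
  · have : (i₀ : ℝ) ≤ j := by exact_mod_cast hji
    linarith [mul_le_mul this hs hs₀ j.cast_nonneg]
  · have : (i₀ : ℝ) + 1 ≤ p := by exact_mod_cast hi₀p
    linarith [mul_le_mul this hs hs₀ p.cast_nonneg]

lemma val_le_of_polyEval_eq_zero (hmul : ∀ x y : K, x ≠ 0 → y ≠ 0 → v (x * y) = v x + v y)
    (hadd : ∀ x y : K, x ≠ 0 → y ≠ 0 → x + y ≠ 0 → min (v x) (v y) ≤ v (x + y))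
    (hap : a p = 1) (haint : ∀ i, i < p → a i = 0 ∨ 1 ≤ v (a i))
    (hi₀p : i₀ < p) (hlow : ∀ i, i < i₀ → a i = 0) (hi₀ : a i₀ ≠ 0)
    {x : K} (hx : x ≠ 0) (hvx : 0 ≤ v x) (hfx : polyEval a p x = 0) :
    v x ≤ v (a i₀) := by
  have hmem : i₀ ∈ Finset.range (p + 1) := Finset.mem_range.2 (by omega)
  set T := ∑ j ∈ (Finset.range (p + 1)).erase i₀, a j * x ^ j
  have hlead : a i₀ * x ^ i₀ ≠ 0 := mul_ne_zero hi₀ (pow_ne_zero _ hx)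
  have hT : T = -(a i₀ * x ^ i₀) := by
    rw [polyEval, ← Finset.add_sum_erase _ _ hmem] at hfx
    linear_combination hfx
  have hvT : v T = v (a i₀) + i₀ * v x := by
    rw [hT, val_neg hmul hlead, hmul _ _ hi₀ (pow_ne_zero _ hx), val_pow hmul hx]
  have hTge : (i₀ + 1) * v x ≤ v T := by
    refine le_val_sum hadd _ _ (fun j hj => ?_) (show T ≠ 0 by rw [hT]; exact neg_ne_zero.2 hlead)
    obtain ⟨hji₀, hj⟩ := Finset.mem_erase.1 hj
    rcases lt_or_ge j i₀ with hji | hji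
    · exact .inl (by rw [hlow j hji, zero_mul])
    have hjp : j ≤ p := Nat.lt_succ_iff.1 (Finset.mem_range.1 hj)
    refine (coeff_mul_pow_eq_zero_or_le hmul hap haint hx hjp).imp_right (le_trans (le_min ?_ ?_))
    · have : (i₀ : ℝ) + 1 ≤ j := by exact_mod_cast (show i₀ + 1 ≤ j by omega)
      linarith [mul_le_mul_of_nonneg_right this hvx]
    · have : (i₀ : ℝ) + 1 ≤ p := by exact_mod_cast hi₀p
      exact mul_le_mul_of_nonneg_right this hvx
  linarith

lemma geom_sum_mul_le_val_iterate (hmul : ∀ x y : K, x ≠ 0 → y ≠ 0 → v (x * y) = v x + v y)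
    (hadd : ∀ x y : K, x ≠ 0 → y ≠ 0 → x + y ≠ 0 → min (v x) (v y) ≤ v (x + y))
    (hap : a p = 1) (haint : ∀ i, i < p → a i = 0 ∨ 1 ≤ v (a i))
    (hi₀p : i₀ < p) (hlow : ∀ i, i < i₀ → a i = 0) (hi₀pos : 1 ≤ i₀)
    {π : K} (hvπ₀ : 0 ≤ v π) (hvπ₁ : v π ≤ 1) {k : ℕ} (hk : (polyEval a p)^[k] π ≠ 0) :
    (∑ j ∈ Finset.range (k + 1), (i₀ : ℝ) ^ j) * v π ≤ v ((polyEval a p)^[k] π) := by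
  induction k with
  | zero => simp
  | succ k ih =>
    have hk' : (polyEval a p)^[k] π ≠ 0 := fun h0 => hk (by
      rw [Function.iterate_succ_apply', h0, polyEval_zero (hlow 0 hi₀pos)])
    have hS : 1 ≤ ∑ j ∈ Finset.range (k + 1), (i₀ : ℝ) ^ j := by
      rw [geom_sum_succ]
      have : 0 ≤ (i₀ : ℝ) * ∑ j ∈ Finset.range k, (i₀ : ℝ) ^ j := by positivity
      linarith
    rw [Function.iterate_succ_apply'] at hk ⊢
    rw [geom_sum_succ, add_one_mul, mul_assoc]
    exact le_val_polyEval hmul hadd hap haint hi₀p hlow hk' hvπ₀ hvπ₁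
      (le_mul_of_one_le_left hvπ₀ hS) (ih hk') hk

lemma geom_sum_mul_le_val_of_iterate_succ_eq_zero
    (hmul : ∀ x y : K, x ≠ 0 → y ≠ 0 → v (x * y) = v x + v y)
    (hadd : ∀ x y : K, x ≠ 0 → y ≠ 0 → x + y ≠ 0 → min (v x) (v y) ≤ v (x + y))
    (hap : a p = 1) (haint : ∀ i, i < p → a i = 0 ∨ 1 ≤ v (a i))
    (hi₀p : i₀ < p) (hlow : ∀ i, i < i₀ → a i = 0) (hi₀pos : 1 ≤ i₀) (hi₀ : a i₀ ≠ 0)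
    {π : K} (hvπ₀ : 0 ≤ v π) (hvπ₁ : v π ≤ 1) {k : ℕ} (hk : (polyEval a p)^[k] π ≠ 0)
    (hk₁ : (polyEval a p)^[k + 1] π = 0) :
    (∑ j ∈ Finset.range (k + 1), (i₀ : ℝ) ^ j) * v π ≤ v (a i₀) := by
  have hgrowth := geom_sum_mul_le_val_iterate hmul hadd hap haint hi₀p hlow hi₀pos hvπ₀ hvπ₁ hk
  have hvx : 0 ≤ v ((polyEval a p)^[k] π) :=
    (mul_nonneg (Finset.sum_nonneg fun j _ => by positivity) hvπ₀).trans hgrowth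
  rw [Function.iterate_succ_apply'] at hk₁
  exact hgrowth.trans (val_le_of_polyEval_eq_zero hmul hadd hap haint hi₀p hlow hi₀ hk hvx hk₁)

end

lemma pow_le_of_geom_sum_le {r B : ℝ} (hr : 1 < r) {n : ℕ} (h : ∑ j ∈ Finset.range n, r ^ j ≤ B) :
    r ^ n ≤ (r - 1) * B + 1 := by
  rw [geom_sum_eq hr.ne', div_le_iff₀ (sub_pos.2 hr)] at h
  linarith

theorem nonvanishing_of_iterates_iff_up_to_n0_general
    (p : ℕ)
    (K : Type*) [Field K]
    (v : K → ℝ)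
    (hmul : ∀ x y : K, x ≠ 0 → y ≠ 0 → v (x * y) = v x + v y)
    (hadd : ∀ x y : K, x ≠ 0 → y ≠ 0 → x + y ≠ 0 → min (v x) (v y) ≤ v (x + y))
    (e : ℕ) (he : 1 ≤ e)
    (a : ℕ → K) (hap : a p = 1)
    (haint : ∀ i, i < p → a i = 0 ∨ 1 ≤ v (a i))
    (i₀ : ℕ) (hi₀l : 1 ≤ i₀) (hi₀u : i₀ < p)
    (hlow : ∀ i, i < i₀ → a i = 0)
    (hi₀ne : a i₀ ≠ 0)
    (π : K) (hπne : π ≠ 0) (hvπ : v π = 1 / (e : ℝ)) :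
    (∀ n : ℕ, 1 ≤ n →
        (fun x : K => ∑ j ∈ Finset.range (p + 1), a j * x ^ j)^[n] π ≠ 0) ↔
      (∀ n : ℕ, 1 ≤ n →
        (if i₀ = 1 then (n : ℝ) ≤ (e : ℝ) * v (a 1)
          else (i₀ : ℝ) ^ n ≤ (e : ℝ) * ((i₀ : ℝ) - 1) * v (a i₀) + 1) →
        (fun x : K => ∑ j ∈ Finset.range (p + 1), a j * x ^ j)^[n] π ≠ 0) := by
  have he' : (0 : ℝ) < e := by exact_mod_cast he
  have hvπ₀ : 0 ≤ v π := by rw [hvπ]; positivity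
  have hvπ₁ : v π ≤ 1 := by rw [hvπ, div_le_one he']; exact_mod_cast he
  refine ⟨fun h n hn _ => h n hn, fun h n _ hn => ?_⟩
  obtain ⟨k, hk, hk₁⟩ :=
    Function.exists_not_iterate_and_iterate_succ (polyEval a p) (P := (· = 0)) hπne hn
  have hsum : ∑ j ∈ Finset.range (k + 1), (i₀ : ℝ) ^ j ≤ e * v (a i₀) := by
    have := geom_sum_mul_le_val_of_iterate_succ_eq_zero hmul hadd hap haint hi₀u hlow hi₀l hi₀ne
      hvπ₀ hvπ₁ hk hk₁
    rwa [hvπ, mul_one_div, div_le_iff₀ he', mul_comm] at this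
  refine h (k + 1) k.succ_pos ?_ hk₁
  split_ifs with hi₀1
  · subst hi₀1
    simpa using hsum
  · have hi₀1' : (1 : ℝ) < i₀ := by exact_mod_cast (show 1 < i₀ by omega)
    linarith [pow_le_of_geom_sum_le hi₀1' hsum]

/-- Define `n₀ = e·v_p(a_1)` if `i₀ = 1`, and `n₀ = max{n ∈ ℤ : i₀^n ≤ e(i₀-1)v_p(a_{i₀}) + 1}`
if `i₀ ≠ 1`, where `i₀` is the least index with `a_{i₀} ≠ 0`.  Then `f^{(n)}(π) ≠ 0` for
all `n ≥ 1` iff `f^{(n)}(π) ≠ 0` for all `1 ≤ n ≤ n₀`.  (The condition `n ≤ n₀` is encoded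
directly: `(n : ℝ) ≤ e·v(a 1)` when `i₀ = 1`, and `i₀^n ≤ e(i₀-1)v(a i₀) + 1` when
`i₀ ≠ 1`; since `i₀ ≥ 2` in the latter case this is equivalent to `n ≤ n₀`.) -/
theorem nonvanishing_of_iterates_iff_up_to_n0
    (p : ℕ) (hp : p.Prime)
    (K : Type*) [Field K]
    (v : K → ℝ)
    (hmul : ∀ x y : K, x ≠ 0 → y ≠ 0 → v (x * y) = v x + v y)
    (hadd : ∀ x y : K, x ≠ 0 → y ≠ 0 → x + y ≠ 0 → min (v x) (v y) ≤ v (x + y))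
    (hpK : (p : K) ≠ 0)
    (hvp : v (p : K) = 1)
    (e : ℕ) (he : 1 ≤ e)
    (a : ℕ → K) (hap : a p = 1)
    (haint : ∀ i, i < p → a i = 0 ∨ 1 ≤ v (a i))
    (i₀ : ℕ) (hi₀l : 1 ≤ i₀) (hi₀u : i₀ < p)
    (hlow : ∀ i, i < i₀ → a i = 0)
    (hi₀ne : a i₀ ≠ 0)
    (π : K) (hπne : π ≠ 0) (hvπ : v π = 1 / (e : ℝ)) :
    (∀ n : ℕ, 1 ≤ n →
        (fun x : K => ∑ j ∈ Finset.range (p + 1), a j * x ^ j)^[n] π ≠ 0) ↔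
      (∀ n : ℕ, 1 ≤ n →
        (if i₀ = 1 then (n : ℝ) ≤ (e : ℝ) * v (a 1)
          else (i₀ : ℝ) ^ n ≤ (e : ℝ) * ((i₀ : ℝ) - 1) * v (a i₀) + 1) →
        (fun x : K => ∑ j ∈ Finset.range (p + 1), a j * x ^ j)^[n] π ≠ 0) :=
  nonvanishing_of_iterates_iff_up_to_n0_general p K v hmul hadd e he a hap haint i₀ hi₀l hi₀u hlow
    hi₀ne π hπne hvπ
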